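/- arXiv:1111.4470 — 4 statements merged into one kernel-verified Lean document; each statement's English description precedes it below -/
import Mathlib

section
/- Let (X, ρ) be a metric space with diameter at most 1, let S ⊆ X be finite, let L' ≥ η > 0, and let h' : S → [0,1] satisfy |h'(x) − h'(x')| ≤ η²/(24q) + (1+2η)·L'·ρ(x,x') for all x, x' ∈ S, where q ∈ {1,2} and 0 < η ≤ 1/4. Let N ⊆ S be an (η/L')-net of S (points of N are pairwise at distance ≥ η/L' and every point of S is within η/L' of N). Then for all distinct z, z' ∈ N, |h'(z) − h'(z')| < (1+3η)·L'·ρ(z,z'). -/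
/-- An approximate-LP hypothesis restricted to a net is `(1+3η)L'`-Lipschitz. -/
theorem net_lipschitz {X : Type*} [MetricSpace X]
    (S : Set X) (hSfin : S.Finite)
    (hdiam : ∀ x ∈ S, ∀ y ∈ S, dist x y ≤ 1)
    (q : ℕ) (hq : q = 1 ∨ q = 2)
    (η L' : ℝ) (hη : 0 < η) (hη4 : η ≤ 1 / 4) (hL' : η ≤ L')
    (h' : X → ℝ) (hrange : ∀ x ∈ S, h' x ∈ Set.Icc (0:ℝ) 1)
    (happrox : ∀ x ∈ S, ∀ x' ∈ S,
      |h' x - h' x'| ≤ η ^ 2 / (24 * q) + (1 + 2 * η) * L' * dist x x')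
    (N : Set X) (hNS : N ⊆ S)
    (hsep : ∀ z ∈ N, ∀ z' ∈ N, z ≠ z' → η / L' ≤ dist z z')
    (hcover : ∀ x ∈ S, ∃ z ∈ N, dist x z ≤ η / L') :
    ∀ z ∈ N, ∀ z' ∈ N, z ≠ z' →
      |h' z - h' z'| < (1 + 3 * η) * L' * dist z z' := by
  intro z hz z' hz' hne
  have hLpos : 0 < L' := lt_of_lt_of_le hη hL'
  have hd : η / L' ≤ dist z z' := hsep z hz z' hz' hne
  have hqpos : (1:ℝ) ≤ q := by rcases hq with h | h <;> simp [h] <;> norm_num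
  have h1 : |h' z - h' z'| ≤ η ^ 2 / (24 * q) + (1 + 2 * η) * L' * dist z z' :=
    happrox z (hNS hz) z' (hNS hz')
  have h2 : η ^ 2 / (24 * q) < η ^ 2 := by
    have : (1:ℝ) < 24 * q := by nlinarith
    rw [div_lt_iff₀ (by linarith)]
    nlinarith [sq_nonneg η, hη]
  have h3 : η ^ 2 ≤ η * L' * dist z z' := by
    have := (div_le_iff₀ hLpos).mp hd
    nlinarith
  have : (1 + 3 * η) * L' * dist z z' =
      η * L' * dist z z' + (1 + 2 * η) * L' * dist z z' := by ring
  linarith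
end

section
/- Let x_1, …, x_n be nodes of an ordered path with positive weights w_1, …, w_n summing to W. Then there exists a directed acyclic graph G on these nodes, whose edges all point from a node to an antecedent node in the ordering, with out-degree at most 3, such that the hop-distance (number of edges) from any node x_i to the first node x_1 is O(log(W/w_i)), and the hop-distance from x_i to any antecedent x_j is O(log(W/w_i) + log(W/w_j)). -/
/-- `ReachIn succ k i j`: there is a directed path of at most `k` edges from
`i` to `j` in the graph whose out-neighborhoods are given by `succ`. -/
def ReachIn {m : ℕ} (succ : Fin m → Finset (Fin m)) : ℕ → Fin m → Fin m → Prop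
  | 0, i, j => i = j
  | k + 1, i, j => i = j ∨ ∃ t ∈ succ i, ReachIn succ k t j

namespace SkipAux

variable {m : ℕ}

lemma reach_refl (succ : Fin m → Finset (Fin m)) : ∀ (k : ℕ) (i : Fin m), ReachIn succ k i i
  | 0, _ => rfl
  | _+1, _ => Or.inl rfl

lemma reach_step (succ : Fin m → Finset (Fin m)) :
    ∀ (k : ℕ) (i j : Fin m), ReachIn succ k i j → ReachIn succ (k+1) i j
  | 0, _, _, h => Or.inl h
  | _+1, _, _, Or.inl h => Or.inl h
  | k+1, _, j, Or.inr ⟨t, ht, h⟩ => Or.inr ⟨t, ht, reach_step succ k t j h⟩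

lemma reach_mono (succ : Fin m → Finset (Fin m)) {k k' : ℕ} (hk : k ≤ k') {i j : Fin m}
    (h : ReachIn succ k i j) : ReachIn succ k' i j := by
  induction k', hk using Nat.le_induction with
  | base => exact h
  | succ n _ ih => exact reach_step succ n i j ih

lemma reach_trans (succ : Fin m → Finset (Fin m)) {i t j : Fin m} :
    ∀ {k₁ k₂ : ℕ}, ReachIn succ k₁ i t → ReachIn succ k₂ t j → ReachIn succ (k₁ + k₂) i j := by
  intro k₁
  induction k₁ generalizing i with
  | zero =>
    intro k₂ h₁ h₂
    have : i = t := h₁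
    subst this
    simpa using h₂
  | succ k ih =>
    intro k₂ h₁ h₂
    rcases h₁ with h | ⟨s, hs, h⟩
    · subst h; exact reach_mono succ (Nat.le_add_left _ _) h₂
    · have e : k + 1 + k₂ = (k + k₂) + 1 := by omega
      rw [e]
      exact Or.inr ⟨s, hs, ih h h₂⟩

lemma reach_edge (succ : Fin m → Finset (Fin m)) {i j : Fin m} (h : j ∈ succ i) :
    ReachIn succ 1 i j := Or.inr ⟨j, h, rfl⟩

lemma reach_mono_succ {s₁ s₂ : Fin m → Finset (Fin m)} (hs : ∀ x, s₁ x ⊆ s₂ x) :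
    ∀ {k : ℕ} {i j : Fin m}, ReachIn s₁ k i j → ReachIn s₂ k i j := by
  intro k
  induction k with
  | zero => intro i j h; exact h
  | succ k ih =>
    intro i j h
    rcases h with h | ⟨t, ht, h⟩
    · exact Or.inl h
    · exact Or.inr ⟨t, hs _ ht, ih h⟩

/-- reachability within a real budget -/
def Rch (succ : Fin m → Finset (Fin m)) (B : ℝ) (i j : Fin m) : Prop :=
  ∃ k : ℕ, (k : ℝ) ≤ B ∧ ReachIn succ k i j

lemma Rch.mono {succ : Fin m → Finset (Fin m)} {B B' : ℝ} {i j : Fin m}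
    (h : Rch succ B i j) (hB : B ≤ B') : Rch succ B' i j :=
  let ⟨k, hk, hr⟩ := h; ⟨k, hk.trans hB, hr⟩

lemma Rch.edge {succ : Fin m → Finset (Fin m)} {i j : Fin m} (h : j ∈ succ i) :
    Rch succ 1 i j := ⟨1, by norm_num, reach_edge succ h⟩

lemma Rch.trans {succ : Fin m → Finset (Fin m)} {B₁ B₂ : ℝ} {i t j : Fin m}
    (h₁ : Rch succ B₁ i t) (h₂ : Rch succ B₂ t j) : Rch succ (B₁ + B₂) i j :=
  let ⟨k₁, hk₁, hr₁⟩ := h₁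
  let ⟨k₂, hk₂, hr₂⟩ := h₂
  ⟨k₁ + k₂, by push_cast; linarith, reach_trans succ hr₁ hr₂⟩

lemma Rch.lift {s₁ s₂ : Fin m → Finset (Fin m)} {B : ℝ} {i j : Fin m}
    (hs : ∀ x, s₁ x ⊆ s₂ x) (h : Rch s₁ B i j) : Rch s₂ B i j :=
  let ⟨k, hk, hr⟩ := h; ⟨k, hk, reach_mono_succ hs hr⟩

lemma logdiv_mono {A B c : ℝ} (hA : 0 < A) (hc : 0 < c) (hAB : A ≤ B) :
    Real.log (A / c) ≤ Real.log (B / c) := by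
  have h2 : A / c ≤ B / c := by gcongr
  exact Real.log_le_log (by positivity) h2

lemma logdiv_half {A B c : ℝ} (hA : 0 < A) (hc : 0 < c) (hAB : 2 * A ≤ B) :
    Real.log (A / c) + Real.log 2 ≤ Real.log (B / c) := by
  have h2 : Real.log (A / c) + Real.log 2 = Real.log (2 * A / c) := by
    rw [show (2 * A / c) = 2 * (A / c) by ring,
      Real.log_mul (by norm_num) (by positivity)]
    ring
  rw [h2]
  exact logdiv_mono (by positivity) hc hAB

lemma two_log_two : (1 : ℝ) ≤ 2 * Real.log 2 := by
  have := Real.log_two_gt_d9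
  linarith

end SkipAux

namespace SkipAux

lemma build {n : ℕ} (w : Fin (n+1) → ℝ) (hw : ∀ i, 0 < w i) :
    ∀ (N : ℕ) (M : Finset (Fin (n+1))), M.card ≤ N → ∀ a : Fin (n+1), (∀ x ∈ M, a < x) →
    ∃ succ : Fin (n+1) → Finset (Fin (n+1)),
      (∀ x, ∀ y ∈ succ x, y < x) ∧
      (∀ x, (succ x).card ≤ 3) ∧
      (∀ x, x ∉ M → succ x = ∅) ∧
      ∀ b, b ∈ M → (∀ y ∈ M, y ≤ b) →
        a ∈ succ b ∧
        (∀ x ∈ M.erase b,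
          Rch succ (2 * (1 + Real.log ((∑ t ∈ M.erase b, w t) / w x))) x a) ∧
        (∀ j ∈ M.erase b,
          Rch succ (1 + 2 * Real.log ((∑ t ∈ M.erase b, w t) / w j)) b j) ∧
        (∀ x ∈ M.erase b, ∀ j ∈ M.erase b, j < x →
          Rch succ (2 * (1 + Real.log ((∑ t ∈ M.erase b, w t) / w x))
            + (1 + 2 * Real.log ((∑ t ∈ M.erase b, w t) / w j))) x j) := by
  intro N
  induction N with
  | zero =>
    intro M hcard a _
    have hM : M = ∅ := Finset.card_eq_zero.mp (Nat.le_zero.mp hcard)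
    subst hM
    exact ⟨fun _ => ∅, by simp, by simp, by simp, by simp⟩
  | succ N ih =>
    intro M hcard a ha
    rcases Finset.eq_empty_or_nonempty M with hM | hM
    · subst hM
      exact ⟨fun _ => ∅, by simp, by simp, by simp, by simp⟩
    set b := M.max' hM with hbdef
    have hbM : b ∈ M := M.max'_mem hM
    set M₀ := M.erase b with hM₀def
    have hM₀sub : M₀ ⊆ M := Finset.erase_subset _ _
    have hM₀b : b ∉ M₀ := Finset.notMem_erase _ _
    have hM₀lt : ∀ x ∈ M₀, x < b := fun x hx =>
      lt_of_le_of_ne (M.le_max' x (hM₀sub hx)) (Finset.ne_of_mem_erase hx)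
    have hM₀card : M₀.card ≤ N := by
      rw [hM₀def]
      have := Finset.card_erase_lt_of_mem hbM
      omega
    rcases Finset.eq_empty_or_nonempty M₀ with hM₀ | hM₀
    · -- M = {b}
      refine ⟨fun x => if x = b then {a} else ∅, ?_, ?_, ?_, ?_⟩
      · intro x y hy
        have hy' : y ∈ (if x = b then ({a} : Finset (Fin (n+1))) else ∅) := hy
        split_ifs at hy' with hx
        · rw [Finset.mem_singleton] at hy'
          subst hy'
          rw [hx]
          exact ha _ hbM
        · simp at hy'
      · intro x; by_cases hx : x = b <;> simp [hx]
      · intro x hx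
        have : x ≠ b := fun h => hx (h ▸ hbM)
        simp [this]
      · intro b' hb' _
        have hb'b : b' = b := by
          by_contra hne
          have : b' ∈ M₀ := Finset.mem_erase.mpr ⟨hne, hb'⟩
          rw [hM₀] at this; simp at this
        subst hb'b
        refine ⟨by simp, ?_, ?_, ?_⟩ <;>
          · intro x hx
            rw [← hM₀def, hM₀] at hx
            simp at hx
    -- main case
    set V := ∑ t ∈ M₀, w t with hVdef
    have hVpos : 0 < V := Finset.sum_pos (fun i _ => hw i) hM₀
    set T := M₀.filter (fun y => V/2 < ∑ t ∈ M₀.filter (fun x => x ≤ y), w t) with hTdef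
    have hTne : T.Nonempty := by
      refine ⟨M₀.max' hM₀, Finset.mem_filter.mpr ⟨M₀.max'_mem hM₀, ?_⟩⟩
      have : M₀.filter (fun x => x ≤ M₀.max' hM₀) = M₀ :=
        Finset.filter_true_of_mem (fun x hx => M₀.le_max' x hx)
      rw [this, ← hVdef]; linarith
    set mm := T.min' hTne with hmmdef
    have hmT : mm ∈ T := T.min'_mem hTne
    have hmM₀ : mm ∈ M₀ := Finset.mem_of_mem_filter _ hmT
    have hm_half : V/2 < ∑ t ∈ M₀.filter (fun x => x ≤ mm), w t := (Finset.mem_filter.mp hmT).2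
    set Ml := M₀.filter (fun x => x < mm) with hMldef
    set Mr := M₀.filter (fun x => mm < x) with hMrdef
    have hMlmem : ∀ x, x ∈ Ml ↔ x ∈ M₀ ∧ x < mm := fun x => Finset.mem_filter
    have hMrmem : ∀ x, x ∈ Mr ↔ x ∈ M₀ ∧ mm < x := fun x => Finset.mem_filter
    have hsplit : (∑ t ∈ M₀.filter (fun x => x ≤ mm), w t) + (∑ t ∈ Mr, w t) = V := by
      rw [hMrdef]
      have : M₀.filter (fun x => mm < x) = M₀.filter (fun x => ¬ x ≤ mm) := by
        apply Finset.filter_congr; intro x _; simp [not_le]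
      rw [this, hVdef]
      exact Finset.sum_filter_add_sum_filter_not M₀ _ w
    set WR := ∑ t ∈ Mr, w t with hWRdef
    have hWR : WR ≤ V/2 := by linarith
    have hmMl : mm ∉ Ml := by simp [hMlmem]
    have hfil_le : M₀.filter (fun x => x ≤ mm) = insert mm Ml := by
      ext x
      simp only [Finset.mem_filter, Finset.mem_insert, hMlmem]
      constructor
      · rintro ⟨hx, hle⟩
        rcases lt_or_eq_of_le hle with h | h
        · exact Or.inr ⟨hx, h⟩
        · exact Or.inl h
      · rintro (h | ⟨hx, hlt⟩)
        · subst h; exact ⟨hmM₀, le_refl _⟩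
        · exact ⟨hx, le_of_lt hlt⟩
    set WL := ∑ t ∈ Ml, w t with hWLdef
    have hWL : WL ≤ V/2 := by
      by_contra hcon
      push_neg at hcon
      have hMlne : Ml.Nonempty := by
        rcases Finset.eq_empty_or_nonempty Ml with h | h
        · rw [h] at hWLdef; simp at hWLdef; rw [hWLdef] at hcon; linarith
        · exact h
      set m' := Ml.max' hMlne with hm'def
      have hm'Ml : m' ∈ Ml := Ml.max'_mem hMlne
      have hsub : Ml ⊆ M₀.filter (fun x => x ≤ m') := by
        intro x hx
        exact Finset.mem_filter.mpr ⟨(hMlmem x).mp hx |>.1, Ml.le_max' x hx⟩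
      have hsum : WL ≤ ∑ t ∈ M₀.filter (fun x => x ≤ m'), w t := by
        rw [hWLdef]
        exact Finset.sum_le_sum_of_subset_of_nonneg hsub (fun i _ _ => (hw i).le)
      have hm'T : m' ∈ T := Finset.mem_filter.mpr
        ⟨(hMlmem m').mp hm'Ml |>.1, lt_of_lt_of_le hcon hsum⟩
      have h1 : mm ≤ m' := T.min'_le m' hm'T
      have h2 : m' < mm := ((hMlmem m').mp hm'Ml).2
      exact absurd h1 (not_le.mpr h2)
    -- subcalls
    set Lset := insert mm Ml with hLsetdef
    have hLsub : Lset ⊆ M₀ := by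
      rw [← hfil_le]
      exact Finset.filter_subset _ _
    have hLcard : Lset.card ≤ N := le_trans (Finset.card_le_card hLsub) hM₀card
    have hRcard : Mr.card ≤ N :=
      le_trans (Finset.card_le_card (Finset.filter_subset _ _)) hM₀card
    obtain ⟨sL, hL1, hL2, hL3, hL4⟩ := ih Lset hLcard a
      (fun x hx => ha x (hM₀sub (hLsub hx)))
    obtain ⟨sR, hR1, hR2, hR3, hR4⟩ := ih Mr hRcard mm
      (fun x hx => ((hMrmem x).mp hx).2)
    have hLne : Lset.Nonempty := ⟨mm, Finset.mem_insert_self _ _⟩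
    have hLmax : ∀ y ∈ Lset, y ≤ mm := by
      intro y hy
      rcases Finset.mem_insert.mp hy with h | h
      · exact le_of_eq h
      · exact le_of_lt ((hMlmem y).mp h).2
    obtain ⟨hL_edge, hL_C, hL_E, hL_D⟩ := hL4 mm (Finset.mem_insert_self _ _) hLmax
    have hLerase : Lset.erase mm = Ml := by rw [hLsetdef]; exact Finset.erase_insert hmMl
    rw [hLerase, ← hWLdef] at hL_C hL_E hL_D
    -- right pack, conditional on nonempty
    have hRpack : ∀ h : Mr.Nonempty,
        mm ∈ sR (Mr.max' h) ∧
        (∀ x ∈ Mr.erase (Mr.max' h),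
          Rch sR (2 * (1 + Real.log ((∑ t ∈ Mr.erase (Mr.max' h), w t) / w x))) x mm) ∧
        (∀ j ∈ Mr.erase (Mr.max' h),
          Rch sR (1 + 2 * Real.log ((∑ t ∈ Mr.erase (Mr.max' h), w t) / w j)) (Mr.max' h) j) ∧
        (∀ x ∈ Mr.erase (Mr.max' h), ∀ j ∈ Mr.erase (Mr.max' h), j < x →
          Rch sR (2 * (1 + Real.log ((∑ t ∈ Mr.erase (Mr.max' h), w t) / w x))
            + (1 + 2 * Real.log ((∑ t ∈ Mr.erase (Mr.max' h), w t) / w j))) x j) :=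
      fun h => hR4 (Mr.max' h) (Mr.max'_mem h) (fun y hy => Mr.le_max' y hy)
    -- the glued graph
    set rset : Finset (Fin (n+1)) := if h : Mr.Nonempty then {Mr.max' h} else ∅ with hrsetdef
    set succb := insert a (insert mm rset) with hsuccbdef
    set succ : Fin (n+1) → Finset (Fin (n+1)) :=
      fun x => if x = b then succb else if x ∈ Lset then sL x else sR x with hsuccdef
    have hLsetb : b ∉ Lset := fun h => hM₀b (hLsub h)
    have hMrb : b ∉ Mr := fun h => hM₀b (Finset.filter_subset _ _ h)
    have hsucc_b : succ b = succb := by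
      show (if b = b then succb else if b ∈ Lset then sL b else sR b) = succb
      rw [if_pos rfl]
    have hsucc_L : ∀ x ∈ Lset, succ x = sL x := by
      intro x hx
      have hxb : x ≠ b := fun h => hLsetb (h ▸ hx)
      show (if x = b then succb else if x ∈ Lset then sL x else sR x) = sL x
      rw [if_neg hxb, if_pos hx]
    have hsucc_O : ∀ x, x ≠ b → x ∉ Lset → succ x = sR x := by
      intro x hxb hxL
      show (if x = b then succb else if x ∈ Lset then sL x else sR x) = sR x
      rw [if_neg hxb, if_neg hxL]
    have hsucc_R : ∀ x ∈ Mr, succ x = sR x := by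
      intro x hx
      have hxb : x ≠ b := fun h => hMrb (h ▸ hx)
      have hxL : x ∉ Lset := by
        intro hL
        have h1 := hLmax x hL
        have h2 := ((hMrmem x).mp hx).2
        exact absurd h1 (not_le.mpr h2)
      exact hsucc_O x hxb hxL
    have hsLsub : ∀ x, sL x ⊆ succ x := by
      intro x
      by_cases hx : x ∈ Lset
      · rw [hsucc_L x hx]
      · rw [hL3 x hx]; exact Finset.empty_subset _
    have hsRsub : ∀ x, sR x ⊆ succ x := by
      intro x
      by_cases hx : x ∈ Mr
      · rw [hsucc_R x hx]
      · rw [hR3 x hx]; exact Finset.empty_subset _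
    have hamem : a ∈ succ b := by
      rw [hsucc_b, hsuccbdef]
      exact Finset.mem_insert_self _ _
    have hmmem : mm ∈ succ b := by
      rw [hsucc_b, hsuccbdef]
      exact Finset.mem_insert_of_mem (Finset.mem_insert_self _ _)
    have hrmem : ∀ h : Mr.Nonempty, Mr.max' h ∈ succ b := by
      intro h
      rw [hsucc_b, hsuccbdef, hrsetdef, dif_pos h]
      exact Finset.mem_insert_of_mem (Finset.mem_insert_of_mem (Finset.mem_singleton_self _))
    -- edge from mm to a in glued graph
    have hedge_ma : Rch succ 1 mm a := Rch.edge (hsLsub mm hL_edge)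
    have hedge_bm : Rch succ 1 b mm := Rch.edge hmmem
    -- weights facts
    have hwV : ∀ x ∈ M₀, w x ≤ V := fun x hx =>
      Finset.single_le_sum (fun i _ => (hw i).le) hx
    have hlogV : ∀ x ∈ M₀, 0 ≤ Real.log (V / w x) := fun x hx =>
      Real.log_nonneg ((one_le_div (hw x)).mpr (hwV x hx))
    have hwWL : ∀ x ∈ Ml, w x ≤ WL := fun x hx =>
      Finset.single_le_sum (fun i _ => (hw i).le) hx
    have hlogL : ∀ x ∈ Ml, Real.log (WL / w x) + Real.log 2 ≤ Real.log (V / w x) := by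
      intro x hx
      exact logdiv_half (lt_of_lt_of_le (hw x) (hwWL x hx)) (hw x) (by linarith)
    have hlogL' : ∀ x ∈ Ml, Real.log (WL / w x) ≤ Real.log (V / w x) := by
      intro x hx
      have := hlogL x hx
      have h2 : (0:ℝ) < Real.log 2 := by have := two_log_two; linarith
      linarith
    have h2log2 := two_log_two
    refine ⟨succ, ?_, ?_, ?_, ?_⟩
    · -- edges decrease
      intro x y hy
      by_cases hx : x = b
      · subst hx
        rw [hsucc_b, hsuccbdef] at hy
        rcases Finset.mem_insert.mp hy with h | hy2
        · subst h; exact ha _ hbM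
        rcases Finset.mem_insert.mp hy2 with h | h3
        · subst h; exact hM₀lt _ hmM₀
        · rw [hrsetdef] at h3
          by_cases hne : Mr.Nonempty
          · rw [dif_pos hne, Finset.mem_singleton] at h3
            subst h3
            exact hM₀lt _ (Finset.filter_subset _ _ (Mr.max'_mem hne))
          · rw [dif_neg hne] at h3
            simp at h3
      · by_cases hxL : x ∈ Lset
        · rw [hsucc_L x hxL] at hy; exact hL1 x y hy
        · rw [hsucc_O x hx hxL] at hy; exact hR1 x y hy
    · -- out-degree
      intro x
      by_cases hx : x = b
      · subst hx
        rw [hsucc_b, hsuccbdef]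
        have hr : rset.card ≤ 1 := by
          rw [hrsetdef]
          by_cases hne : Mr.Nonempty
          · rw [dif_pos hne]; simp
          · rw [dif_neg hne]; simp
        have h1 := Finset.card_insert_le mm rset
        have h2 := Finset.card_insert_le a (insert mm rset)
        omega
      · by_cases hxL : x ∈ Lset
        · rw [hsucc_L x hxL]; exact hL2 x
        · rw [hsucc_O x hx hxL]; exact hR2 x
    · -- support
      intro x hx
      have hxb : x ≠ b := fun h => hx (h ▸ hbM)
      have hxL : x ∉ Lset := fun h => hx (hM₀sub (hLsub h))
      have hxR : x ∉ Mr := fun h => hx (hM₀sub (Finset.filter_subset _ _ h))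
      rw [hsucc_O x hxb hxL]
      exact hR3 x hxR
    · -- main reach specs
      intro b' hb' hb'max
      have hb'b : b' = b := le_antisymm (M.le_max' b' hb') (hb'max b hbM)
      subst hb'b
      have hsum_eq : (∑ t ∈ M.erase b, w t) = V := hVdef.symm
      rw [hsum_eq]
      refine ⟨hamem, ?_, ?_, ?_⟩
      · -- (C) : x to a
        intro x hx
        rw [← hM₀def] at hx
        rcases lt_trichotomy x mm with hlt | heq | hgt
        · have hxMl : x ∈ Ml := (hMlmem x).mpr ⟨hx, hlt⟩
          refine ((hL_C x hxMl).lift hsLsub).mono ?_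
          have := hlogL' x hxMl
          linarith
        · subst heq
          exact hedge_ma.mono (by have := hlogV _ hx; linarith)
        · have hxMr : x ∈ Mr := (hMrmem x).mpr ⟨hx, hgt⟩
          have hMrne : Mr.Nonempty := ⟨x, hxMr⟩
          obtain ⟨hR_edge, hR_C, hR_E, hR_D⟩ := hRpack hMrne
          by_cases hxr : x = Mr.max' hMrne
          · subst hxr
            have h1 : Rch succ 1 (Mr.max' hMrne) mm := Rch.edge (hsRsub _ hR_edge)
            exact (h1.trans hedge_ma).mono (by have := hlogV _ hx; norm_num; linarith)
          · have hxMrr : x ∈ Mr.erase (Mr.max' hMrne) := Finset.mem_erase.mpr ⟨hxr, hxMr⟩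
            set VR := ∑ t ∈ Mr.erase (Mr.max' hMrne), w t with hVRdef
            have hVRle : VR ≤ V/2 := le_trans
              (Finset.sum_le_sum_of_subset_of_nonneg (Finset.erase_subset _ _)
                (fun i _ _ => (hw i).le)) hWR
            have hwVR : w x ≤ VR := Finset.single_le_sum (fun i _ => (hw i).le) hxMrr
            have hlogR : Real.log (VR / w x) + Real.log 2 ≤ Real.log (V / w x) :=
              logdiv_half (lt_of_lt_of_le (hw x) hwVR) (hw x) (by linarith)
            refine (((hR_C x hxMrr).lift hsRsub).trans hedge_ma).mono ?_
            linarith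
      · -- (E) : b to j
        intro j hj
        rw [← hM₀def] at hj
        rcases lt_trichotomy j mm with hlt | heq | hgt
        · have hjMl : j ∈ Ml := (hMlmem j).mpr ⟨hj, hlt⟩
          refine (hedge_bm.trans ((hL_E j hjMl).lift hsLsub)).mono ?_
          have := hlogL j hjMl
          linarith
        · subst heq
          exact hedge_bm.mono (by have := hlogV _ hj; linarith)
        · have hjMr : j ∈ Mr := (hMrmem j).mpr ⟨hj, hgt⟩
          have hMrne : Mr.Nonempty := ⟨j, hjMr⟩
          obtain ⟨hR_edge, hR_C, hR_E, hR_D⟩ := hRpack hMrne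
          have hbr : Rch succ 1 b (Mr.max' hMrne) := Rch.edge (hrmem hMrne)
          by_cases hjr : j = Mr.max' hMrne
          · subst hjr
            exact hbr.mono (by have := hlogV _ hj; linarith)
          · have hjMrr : j ∈ Mr.erase (Mr.max' hMrne) := Finset.mem_erase.mpr ⟨hjr, hjMr⟩
            set VR := ∑ t ∈ Mr.erase (Mr.max' hMrne), w t with hVRdef
            have hVRle : VR ≤ V/2 := le_trans
              (Finset.sum_le_sum_of_subset_of_nonneg (Finset.erase_subset _ _)
                (fun i _ _ => (hw i).le)) hWR
            have hwVR : w j ≤ VR := Finset.single_le_sum (fun i _ => (hw i).le) hjMrr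
            have hlogR : Real.log (VR / w j) + Real.log 2 ≤ Real.log (V / w j) :=
              logdiv_half (lt_of_lt_of_le (hw j) hwVR) (hw j) (by linarith)
            refine (hbr.trans ((hR_E j hjMrr).lift hsRsub)).mono ?_
            linarith
      · -- (D) : x to j
        intro x hx j hj hjx
        rw [← hM₀def] at hx hj
        rcases lt_trichotomy x mm with hxlt | hxeq | hxgt
        · -- x < mm, so j < mm as well
          have hxMl : x ∈ Ml := (hMlmem x).mpr ⟨hx, hxlt⟩
          have hjMl : j ∈ Ml := (hMlmem j).mpr ⟨hj, lt_trans hjx hxlt⟩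
          refine ((hL_D x hxMl j hjMl hjx).lift hsLsub).mono ?_
          have h1 := hlogL' x hxMl
          have h2 := hlogL' j hjMl
          linarith
        · -- x = mm, j < mm
          subst hxeq
          have hjMl : j ∈ Ml := (hMlmem j).mpr ⟨hj, hjx⟩
          refine ((hL_E j hjMl).lift hsLsub).mono ?_
          have h1 := hlogL' j hjMl
          have h2 := hlogV _ hx
          linarith
        · -- x > mm
          have hxMr : x ∈ Mr := (hMrmem x).mpr ⟨hx, hxgt⟩
          have hMrne : Mr.Nonempty := ⟨x, hxMr⟩
          obtain ⟨hR_edge, hR_C, hR_E, hR_D⟩ := hRpack hMrne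
          set r := Mr.max' hMrne with hrdef
          set VR := ∑ t ∈ Mr.erase r, w t with hVRdef
          have hVRle : VR ≤ V/2 := le_trans
            (Finset.sum_le_sum_of_subset_of_nonneg (Finset.erase_subset _ _)
              (fun i _ _ => (hw i).le)) hWR
          have hlogR : ∀ y ∈ Mr.erase r,
              Real.log (VR / w y) + Real.log 2 ≤ Real.log (V / w y) := by
            intro y hy
            have hwVR : w y ≤ VR := Finset.single_le_sum (fun i _ => (hw i).le) hy
            exact logdiv_half (lt_of_lt_of_le (hw y) hwVR) (hw y) (by linarith)
          have hedge_rm : Rch succ 1 r mm := Rch.edge (hsRsub _ hR_edge)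
          -- path from x to mm
          have hxm : Rch succ (2 * (1 + Real.log (V / w x)) - 1) x mm := by
            by_cases hxr : x = r
            · subst hxr
              exact hedge_rm.mono (by have := hlogV _ hx; linarith)
            · have hxMrr : x ∈ Mr.erase r := Finset.mem_erase.mpr ⟨hxr, hxMr⟩
              refine ((hR_C x hxMrr).lift hsRsub).mono ?_
              have := hlogR x hxMrr
              linarith
          rcases lt_trichotomy j mm with hjlt | hjeq | hjgt
          · -- j < mm : go to mm then (E) of left
            have hjMl : j ∈ Ml := (hMlmem j).mpr ⟨hj, hjlt⟩
            refine (hxm.trans ((hL_E j hjMl).lift hsLsub)).mono ?_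
            have := hlogL j hjMl
            linarith
          · -- j = mm
            subst hjeq
            refine hxm.mono ?_
            have := hlogV _ hj
            linarith
          · -- j > mm : both in Mr; j ≠ r since j < x ≤ r
            have hjMr : j ∈ Mr := (hMrmem j).mpr ⟨hj, hjgt⟩
            have hjr : j ≠ r := by
              have : x ≤ r := Mr.le_max' x hxMr
              exact ne_of_lt (lt_of_lt_of_le hjx this)
            have hjMrr : j ∈ Mr.erase r := Finset.mem_erase.mpr ⟨hjr, hjMr⟩
            have hlogRj := hlogR j hjMrr
            have hlogRj' : Real.log (VR / w j) ≤ Real.log (V / w j) := by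
              have h2 : (0:ℝ) < Real.log 2 := by linarith
              linarith
            by_cases hxr : x = r
            · subst hxr
              refine ((hR_E j hjMrr).lift hsRsub).mono ?_
              have := hlogV _ hx
              linarith
            · have hxMrr : x ∈ Mr.erase r := Finset.mem_erase.mpr ⟨hxr, hxMr⟩
              refine ((hR_D x hxMrr j hjMrr hjx).lift hsRsub).mono ?_
              have h1 := hlogR x hxMrr
              have h2 : (0:ℝ) < Real.log 2 := by linarith
              linarith

end SkipAux


/-- Biased skip-list on a weighted path: a DAG with out-degree at most 3 whose
edges point to antecedents, with hop-distance `O(log (W / w i))` to the first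
node and `O(log (W / w i) + log (W / w j))` to any antecedent `j`. -/
theorem weighted_path_skip_list :
    ∃ C : ℝ, 0 < C ∧ ∀ (n : ℕ) (w : Fin (n + 1) → ℝ), (∀ i, 0 < w i) →
      ∃ succ : Fin (n + 1) → Finset (Fin (n + 1)),
        (∀ i, ∀ j ∈ succ i, j < i) ∧
        (∀ i, (succ i).card ≤ 3) ∧
        (∀ i, ReachIn succ
          ⌈C * (1 + Real.log ((∑ t, w t) / w i))⌉₊ i 0) ∧
        (∀ i j, j < i → ReachIn succ
          ⌈C * (1 + Real.log ((∑ t, w t) / w i) + Real.log ((∑ t, w t) / w j))⌉₊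
          i j) := by
  classical
  refine ⟨3, by norm_num, ?_⟩
  intro n w hw
  set M := Finset.univ.erase (0 : Fin (n+1)) with hMdef
  obtain ⟨succ, h1, h2, h3, h4⟩ := SkipAux.build w hw (n+1) M
    (by
      calc M.card ≤ (Finset.univ : Finset (Fin (n+1))).card :=
            Finset.card_le_card (Finset.erase_subset _ _)
        _ = n + 1 := by simp)
    0 (fun x hx => Fin.pos_of_ne_zero (Finset.ne_of_mem_erase hx))
  have hW : ∀ i : Fin (n+1), w i ≤ ∑ t, w t := fun i =>
    Finset.single_le_sum (fun j _ => (hw j).le) (Finset.mem_univ i)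
  have hlogW : ∀ i, 0 ≤ Real.log ((∑ t, w t) / w i) := fun i =>
    Real.log_nonneg ((one_le_div (hw i)).mpr (hW i))
  have key : ∀ (B : ℝ) (i j : Fin (n+1)), SkipAux.Rch succ B i j →
      ∀ x : ℝ, B ≤ x → ReachIn succ ⌈x⌉₊ i j := by
    rintro B i j ⟨k, hk, hr⟩ x hx
    have hkx : (k : ℝ) ≤ (⌈x⌉₊ : ℝ) := le_trans (hk.trans hx) (Nat.le_ceil x)
    exact SkipAux.reach_mono succ (by exact_mod_cast hkx) hr
  refine ⟨succ, h1, h2, ?_, ?_⟩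
  · -- part 1 : reach 0
    intro i
    by_cases hi : i = 0
    · subst hi; exact SkipAux.reach_refl succ _ 0
    · have hiM : i ∈ M := Finset.mem_erase.mpr ⟨hi, Finset.mem_univ i⟩
      have hMne : M.Nonempty := ⟨i, hiM⟩
      obtain ⟨hedge, hC, hE, hD⟩ := h4 (M.max' hMne) (M.max'_mem hMne)
        (fun y hy => M.le_max' y hy)
      have hVW : (∑ t ∈ M.erase (M.max' hMne), w t) ≤ ∑ t, w t :=
        Finset.sum_le_sum_of_subset_of_nonneg (Finset.subset_univ _)
          (fun t _ _ => (hw t).le)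
      by_cases hib : i = M.max' hMne
      · refine key 1 i 0 ?_ _ ?_
        · rw [hib]; exact SkipAux.Rch.edge hedge
        · have := hlogW i; linarith
      · have hiM₀ : i ∈ M.erase (M.max' hMne) := Finset.mem_erase.mpr ⟨hib, hiM⟩
        refine key _ i 0 (hC i hiM₀) _ ?_
        have hV : 0 < ∑ t ∈ M.erase (M.max' hMne), w t :=
          lt_of_lt_of_le (hw i) (Finset.single_le_sum (fun t _ => (hw t).le) hiM₀)
        have hm := SkipAux.logdiv_mono hV (hw i) hVW
        have := hlogW i
        linarith
  · -- part 2 : reach any antecedent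
    intro i j hji
    have hi0 : i ≠ 0 := by
      rintro rfl
      exact absurd hji (not_lt.mpr (Fin.zero_le j))
    have hiM : i ∈ M := Finset.mem_erase.mpr ⟨hi0, Finset.mem_univ i⟩
    have hMne : M.Nonempty := ⟨i, hiM⟩
    obtain ⟨hedge, hC, hE, hD⟩ := h4 (M.max' hMne) (M.max'_mem hMne)
      (fun y hy => M.le_max' y hy)
    have hVW : (∑ t ∈ M.erase (M.max' hMne), w t) ≤ ∑ t, w t :=
      Finset.sum_le_sum_of_subset_of_nonneg (Finset.subset_univ _)
        (fun t _ _ => (hw t).le)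
    by_cases hj0 : j = 0
    · subst hj0
      by_cases hib : i = M.max' hMne
      · refine key 1 i 0 ?_ _ ?_
        · rw [hib]; exact SkipAux.Rch.edge hedge
        · have := hlogW i; have := hlogW 0; linarith
      · have hiM₀ : i ∈ M.erase (M.max' hMne) := Finset.mem_erase.mpr ⟨hib, hiM⟩
        refine key _ i 0 (hC i hiM₀) _ ?_
        have hV : 0 < ∑ t ∈ M.erase (M.max' hMne), w t :=
          lt_of_lt_of_le (hw i) (Finset.single_le_sum (fun t _ => (hw t).le) hiM₀)
        have hm := SkipAux.logdiv_mono hV (hw i) hVW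
        have := hlogW i; have := hlogW 0
        linarith
    · have hjM : j ∈ M := Finset.mem_erase.mpr ⟨hj0, Finset.mem_univ j⟩
      have hjb : j ≠ M.max' hMne := ne_of_lt (lt_of_lt_of_le hji (M.le_max' i hiM))
      have hjM₀ : j ∈ M.erase (M.max' hMne) := Finset.mem_erase.mpr ⟨hjb, hjM⟩
      have hV : 0 < ∑ t ∈ M.erase (M.max' hMne), w t :=
        lt_of_lt_of_le (hw j) (Finset.single_le_sum (fun t _ => (hw t).le) hjM₀)
      have hmj := SkipAux.logdiv_mono hV (hw j) hVW
      by_cases hib : i = M.max' hMne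
      · refine key (1 + 2 * Real.log ((∑ t ∈ M.erase (M.max' hMne), w t) / w j))
          i j ?_ _ ?_
        · rw [hib]; exact hE j hjM₀
        · have := hlogW i; have := hlogW j; linarith
      · have hiM₀ : i ∈ M.erase (M.max' hMne) := Finset.mem_erase.mpr ⟨hib, hiM⟩
        have hmi := SkipAux.logdiv_mono hV (hw i) hVW
        refine key _ i j (hD i hiM₀ j hjM₀ hji) _ ?_
        have := hlogW i; have := hlogW j
        linarith
end

section
/- Let T be a rooted tree on n nodes with maximum degree p, containing directed child-to-parent edges. Then T can be augmented with additional directed descendant-to-ancestor edges to form a DAG G with maximum out-degree p+3 such that the hop-distance in G from any node to each of its ancestors is O(log n). -/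
def lhPtr (lo m x : ℕ) : ℕ × ℕ :=
  if m ≤ 1 then (lo + m / 2 - 1, lo - 1)
  else if lo + m ≤ x + 1 then (lo + m / 2 - 1, lo - 1)
  else if lo + m / 2 ≤ x then lhPtr (lo + m / 2) (m - 1 - m / 2) x
  else lhPtr lo (m / 2) x
termination_by m
decreasing_by
  · omega
  · omega

def lhReach (P : ℕ → ℕ × ℕ) : ℕ → ℕ → ℕ → Prop
  | 0, x, e => x = e
  | (k+1), x, e => x = e ∨
      ∃ t, (1 ≤ x ∧ (t = x - 1 ∨ t = (P x).1 ∨ t = (P x).2)) ∧ e ≤ t ∧ t < x ∧ lhReach P k t e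

lemma lhPtr_top (lo m : ℕ) : lhPtr lo m (lo + m - 1) = (lo + m/2 - 1, lo - 1) := by
  rw [lhPtr]
  by_cases h : m ≤ 1
  · simp [h]
  · rw [if_neg h, if_pos (by omega)]

lemma lhPtr_left {lo m x : ℕ} (h2 : 2 ≤ m) (hx : x < lo + m / 2) :
    lhPtr lo m x = lhPtr lo (m / 2) x := by
  rw [lhPtr, if_neg (by omega), if_neg (by omega), if_neg (by omega)]

lemma lhPtr_right {lo m x : ℕ} (h2 : 2 ≤ m) (hx1 : lo + m / 2 ≤ x) (hx2 : x + 1 < lo + m) :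
    lhPtr lo m x = lhPtr (lo + m / 2) (m - 1 - m / 2) x := by
  rw [lhPtr, if_neg (by omega), if_neg (by omega), if_pos hx1]

lemma lhReach_refl (P : ℕ → ℕ × ℕ) : ∀ k x, lhReach P k x x
  | 0, _ => rfl
  | (_+1), _ => Or.inl rfl

lemma lhReach_step {P : ℕ → ℕ × ℕ} {k x e t : ℕ} (h1 : 1 ≤ x)
    (h2 : t = x - 1 ∨ t = (P x).1 ∨ t = (P x).2) (h3 : e ≤ t) (h4 : t < x)
    (h5 : lhReach P k t e) : lhReach P (k+1) x e :=
  Or.inr ⟨t, ⟨h1, h2⟩, h3, h4, h5⟩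

lemma lhReach_le {P : ℕ → ℕ × ℕ} : ∀ {k x e}, lhReach P k x e → e ≤ x := by
  intro k
  induction k with
  | zero => intro x e h; exact le_of_eq h.symm
  | succ k ih =>
    intro x e h
    rcases h with h | ⟨t, _, het, htx, _⟩
    · exact le_of_eq h.symm
    · omega

lemma lhReach_mono {P : ℕ → ℕ × ℕ} : ∀ {k K x e}, k ≤ K → lhReach P k x e → lhReach P K x e := by
  intro k
  induction k with
  | zero =>
    intro K x e _ h
    cases h
    exact lhReach_refl P K _
  | succ k ih =>
    intro K x e hK h
    obtain ⟨K', rfl⟩ : ∃ K', K = K' + 1 := ⟨K - 1, by omega⟩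
    rcases h with h | ⟨t, hstep, het, htx, hrest⟩
    · exact Or.inl h
    · exact Or.inr ⟨t, hstep, het, htx, ih (by omega) hrest⟩

lemma lhReach_trans {P : ℕ → ℕ × ℕ} : ∀ {a b x y z},
    lhReach P a x y → lhReach P b y z → lhReach P (a + b) x z := by
  intro a
  induction a with
  | zero => intro b x y z h1 h2; cases h1; simpa using h2
  | succ a ih =>
    intro b x y z h1 h2
    rcases h1 with h | ⟨t, hstep, hyt, htx, hrest⟩
    · subst h; exact lhReach_mono (by omega) h2
    · have hzy : z ≤ y := lhReach_le h2
      have h3 : lhReach P (a + b) t z := ih hrest h2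
      have h4 := lhReach_step hstep.1 hstep.2 (by omega) htx h3
      exact lhReach_mono (by omega) h4

/-- Descent: from the top of a canonical interval, reach any element. -/
lemma lhDesc (P : ℕ → ℕ × ℕ) : ∀ (m lo e : ℕ),
    (∀ y, lo ≤ y → y < lo + m → P y = lhPtr lo m y) →
    lo ≤ e → e < lo + m →
    lhReach P (Nat.log 2 m) (lo + m - 1) e := by
  intro m
  induction m using Nat.strong_induction_on with
  | _ m ih =>
    intro lo e hP hle hlt
    by_cases he : e = lo + m - 1
    · rw [he]; exact lhReach_refl _ _ _
    have m2 : 2 ≤ m := by omega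
    have hK1 : 1 ≤ Nat.log 2 m := Nat.log_pos one_lt_two m2
    have hKd : Nat.log 2 (m / 2) = Nat.log 2 m - 1 := Nat.log_div_base 2 m
    rw [show Nat.log 2 m = (Nat.log 2 m - 1) + 1 by omega]
    by_cases hre : lo + m / 2 ≤ e
    -- e in right child: take parent step to top of right child
    · have hm' : m - 1 - m / 2 < m := by omega
      have hPR : ∀ y, lo + m / 2 ≤ y → y < (lo + m / 2) + (m - 1 - m / 2) →
          P y = lhPtr (lo + m / 2) (m - 1 - m / 2) y := by
        intro y h1 h2
        rw [hP y (by omega) (by omega), lhPtr_right m2 h1 (by omega)]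
      have hrec := ih (m - 1 - m / 2) hm' (lo + m / 2) e hPR hre (by omega)
      rw [show (lo + m / 2) + (m - 1 - m / 2) - 1 = lo + m - 2 by omega] at hrec
      have hb : Nat.log 2 (m - 1 - m / 2) ≤ Nat.log 2 m - 1 := by
        have := Nat.log_mono_right (b := 2) (show m - 1 - m / 2 ≤ m / 2 by omega)
        omega
      exact lhReach_step (t := lo + m - 2) (by omega) (Or.inl (by omega)) (by omega) (by omega)
        (lhReach_mono hb hrec)
    -- e in left child: take μ pointer to top of left child
    · have hPL : ∀ y, lo ≤ y → y < lo + m / 2 → P y = lhPtr lo (m / 2) y := by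
        intro y h1 h2
        rw [hP y h1 (by omega), lhPtr_left m2 h2]
      have hrec := ih (m / 2) (by omega) lo e hPL hle (by omega)
      refine lhReach_step (t := lo + m / 2 - 1) (by omega) (Or.inr (Or.inl ?_)) (by omega)
        (by omega) ?_
      · rw [hP (lo + m - 1) (by omega) (by omega), lhPtr_top]
      · rw [hKd] at hrec; exact hrec

/-- Exit: from anywhere in a canonical interval, reach `lo - 1`. -/
lemma lhExit (P : ℕ → ℕ × ℕ) : ∀ (m lo x : ℕ),
    (∀ y, lo ≤ y → y < lo + m → P y = lhPtr lo m y) →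
    1 ≤ lo → lo ≤ x → x < lo + m →
    lhReach P (Nat.log 2 m + 1) x (lo - 1) := by
  intro m
  induction m using Nat.strong_induction_on with
  | _ m ih =>
    intro lo x hP hlo hlx hxm
    by_cases hx : x = lo + m - 1
    · refine lhReach_step (t := lo - 1) (by omega) (Or.inr (Or.inr ?_)) (le_refl _) (by omega)
        (lhReach_refl _ _ _)
      rw [hP x hlx hxm, hx, lhPtr_top]
    have m2 : 2 ≤ m := by omega
    have hK1 : 1 ≤ Nat.log 2 m := Nat.log_pos one_lt_two m2
    have hKd : Nat.log 2 (m / 2) = Nat.log 2 m - 1 := Nat.log_div_base 2 m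
    have hPL : ∀ y, lo ≤ y → y < lo + m / 2 → P y = lhPtr lo (m / 2) y := by
      intro y h1 h2
      rw [hP y h1 (by omega), lhPtr_left m2 h2]
    by_cases hxl : x < lo + m / 2
    · exact lhReach_mono (by omega) (ih (m / 2) (by omega) lo x hPL hlo hlx hxl)
    · have hm' : m - 1 - m / 2 < m := by omega
      have hPR : ∀ y, lo + m / 2 ≤ y → y < (lo + m / 2) + (m - 1 - m / 2) →
          P y = lhPtr (lo + m / 2) (m - 1 - m / 2) y := by
        intro y h1 h2
        rw [hP y (by omega) (by omega), lhPtr_right m2 h1 (by omega)]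
      have h1 := ih (m - 1 - m / 2) hm' (lo + m / 2) x hPR (by omega) (by omega) (by omega)
      rw [show lo + m / 2 - 1 = lo + m / 2 - 1 from rfl] at h1
      -- h1 : reach (lo + m/2 - 1)
      have h2 : lhReach P 1 (lo + m / 2 - 1) (lo - 1) := by
        refine lhReach_step (t := lo - 1) (by omega) (Or.inr (Or.inr ?_)) (le_refl _)
          (by omega) rfl
        rw [hPL (lo + m / 2 - 1) (by omega) (by omega)]
        have h3 : lo + m / 2 - 1 = lo + (m / 2) - 1 := by omega
        rw [h3, lhPtr_top lo (m/2)]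
      have := lhReach_trans h1 h2
      refine lhReach_mono ?_ this
      have hb : Nat.log 2 (m - 1 - m / 2) ≤ Nat.log 2 m - 1 := by
        have := Nat.log_mono_right (b := 2) (show m - 1 - m / 2 ≤ m / 2 by omega)
        omega
      omega

/-- Main line routing lemma. -/
lemma lhMain (P : ℕ → ℕ × ℕ) : ∀ (m lo x e : ℕ),
    (∀ y, lo ≤ y → y < lo + m → P y = lhPtr lo m y) →
    lo ≤ e → e ≤ x → x < lo + m →
    lhReach P (2 * Nat.log 2 m + 1) x e := by
  intro m
  induction m using Nat.strong_induction_on with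
  | _ m ih =>
    intro lo x e hP hle hex hxm
    by_cases hx : x = lo + m - 1
    · subst hx
      exact lhReach_mono (by omega) (lhDesc P m lo e hP hle (by omega))
    have m2 : 2 ≤ m := by omega
    have hK1 : 1 ≤ Nat.log 2 m := Nat.log_pos one_lt_two m2
    have hKd : Nat.log 2 (m / 2) = Nat.log 2 m - 1 := Nat.log_div_base 2 m
    have hPL : ∀ y, lo ≤ y → y < lo + m / 2 → P y = lhPtr lo (m / 2) y := by
      intro y h1 h2
      rw [hP y h1 (by omega), lhPtr_left m2 h2]
    have hm' : m - 1 - m / 2 < m := by omega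
    have hPR : ∀ y, lo + m / 2 ≤ y → y < (lo + m / 2) + (m - 1 - m / 2) →
        P y = lhPtr (lo + m / 2) (m - 1 - m / 2) y := by
      intro y h1 h2
      rw [hP y (by omega) (by omega), lhPtr_right m2 h1 (by omega)]
    have hb : Nat.log 2 (m - 1 - m / 2) ≤ Nat.log 2 m - 1 := by
      have := Nat.log_mono_right (b := 2) (show m - 1 - m / 2 ≤ m / 2 by omega)
      omega
    by_cases hxl : x < lo + m / 2
    · exact lhReach_mono (by omega) (ih (m / 2) (by omega) lo x e hPL hle hex hxl)
    by_cases hel : lo + m / 2 ≤ e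
    · exact lhReach_mono (by omega)
        (ih (m - 1 - m / 2) hm' (lo + m / 2) x e hPR hel hex (by omega))
    -- x in right child, e in left child
    · have h1 := lhExit P (m - 1 - m / 2) (lo + m / 2) x hPR (by omega) (by omega) (by omega)
      have h2 := lhDesc P (m / 2) lo e hPL hle (by omega)
      rw [show lo + (m / 2) - 1 = lo + m / 2 - 1 by omega] at h2
      have := lhReach_trans h1 h2
      exact lhReach_mono (by omega) this

def lhDepth {n : ℕ} (parent : Fin (n+1) → Fin (n+1))
    (hlt : ∀ i : Fin (n+1), i ≠ 0 → (parent i : ℕ) < (i : ℕ)) (i : Fin (n+1)) : ℕ :=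
  if h : i = 0 then 0 else lhDepth parent hlt (parent i) + 1
termination_by (i : ℕ)
decreasing_by exact hlt i h

section TreeDepth

variable {n : ℕ} (parent : Fin (n+1) → Fin (n+1))
  (hlt : ∀ i : Fin (n+1), i ≠ 0 → (parent i : ℕ) < (i : ℕ))

lemma lhDepth_zero : lhDepth parent hlt 0 = 0 := by
  rw [lhDepth]; simp

lemma lhDepth_succ {i : Fin (n+1)} (h : i ≠ 0) :
    lhDepth parent hlt i = lhDepth parent hlt (parent i) + 1 := by
  conv_lhs => rw [lhDepth]
  rw [dif_neg h]

lemma lhDepth_ne_zero {i : Fin (n+1)} (h : 1 ≤ lhDepth parent hlt i) : i ≠ 0 := by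
  intro h0
  rw [h0, lhDepth_zero] at h
  omega

lemma lhDepth_le_aux : ∀ (v : ℕ) (i : Fin (n+1)), (i : ℕ) ≤ v → lhDepth parent hlt i ≤ (i : ℕ) := by
  intro v
  induction v with
  | zero =>
    intro i hi
    have h0 : i = 0 := Fin.ext (by simp only [Fin.val_zero]; omega)
    rw [h0, lhDepth_zero]
    simp
  | succ v ih =>
    intro i hi
    by_cases h0 : i = 0
    · rw [h0, lhDepth_zero]; simp
    · have hp := hlt i h0
      have := ih (parent i) (by omega)
      rw [lhDepth_succ parent hlt h0]
      omega

lemma lhDepth_le (i : Fin (n+1)) : lhDepth parent hlt i ≤ (i : ℕ) :=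
  lhDepth_le_aux parent hlt (i : ℕ) i le_rfl

lemma lhDepth_iterate : ∀ (k : ℕ) (i : Fin (n+1)), k ≤ lhDepth parent hlt i →
    lhDepth parent hlt (parent^[k] i) = lhDepth parent hlt i - k := by
  intro k
  induction k with
  | zero => intro i _; simp
  | succ k ih =>
    intro i hk
    have h0 : i ≠ 0 := lhDepth_ne_zero parent hlt (by omega)
    have hsucc := lhDepth_succ parent hlt h0
    rw [Function.iterate_succ_apply]
    rw [ih (parent i) (by omega)]
    omega

lemma lhDepth_iterate_zero (hroot : parent 0 = 0) :
    ∀ (v : ℕ) (i : Fin (n+1)), (i : ℕ) ≤ v → parent^[lhDepth parent hlt i] i = 0 := by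
  intro v
  induction v with
  | zero =>
    intro i hi
    have h0 : i = 0 := Fin.ext (by simp only [Fin.val_zero]; omega)
    rw [h0, lhDepth_zero, Function.iterate_zero_apply]
  | succ v ih =>
    intro i hi
    by_cases h0 : i = 0
    · rw [h0, lhDepth_zero, Function.iterate_zero_apply]
    · have hp := hlt i h0
      rw [lhDepth_succ parent hlt h0, Function.iterate_succ_apply]
      exact ih (parent i) (by omega)

end TreeDepth

lemma ReachIn_refl {m : ℕ} (succ : Fin m → Finset (Fin m)) : ∀ k i, ReachIn succ k i i
  | 0, _ => rfl
  | (_+1), _ => Or.inl rfl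

lemma ReachIn_mono {m : ℕ} {succ : Fin m → Finset (Fin m)} :
    ∀ {k K : ℕ} {i j}, k ≤ K → ReachIn succ k i j → ReachIn succ K i j := by
  intro k
  induction k with
  | zero =>
    intro K i j _ h
    cases h
    exact ReachIn_refl succ K _
  | succ k ih =>
    intro K i j hK h
    obtain ⟨K', rfl⟩ : ∃ K', K = K' + 1 := ⟨K - 1, by omega⟩
    rcases h with h | ⟨t, hmem, hrest⟩
    · exact Or.inl h
    · exact Or.inr ⟨t, hmem, ih (by omega) hrest⟩

/-- A rooted tree (given by a parent function, nodes topologically ordered with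
root `0`) of maximum degree `p` can be augmented with descendant-to-ancestor
edges to a DAG of out-degree at most `p + 3` in which every node reaches each
of its ancestors within `O(log n)` hops. -/
theorem tree_low_hop_augmentation :
    ∃ C : ℝ, 0 < C ∧
      ∀ (n p : ℕ) (parent : Fin (n + 1) → Fin (n + 1)),
        parent 0 = 0 → (∀ i : Fin (n + 1), i ≠ 0 → parent i < i) →
        (∀ i : Fin (n + 1),
          (Finset.univ.filter (fun j : Fin (n + 1) => parent j = i ∧ j ≠ i)).card ≤ p) →
        ∃ succ : Fin (n + 1) → Finset (Fin (n + 1)),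
          (∀ i : Fin (n + 1), i ≠ 0 → parent i ∈ succ i) ∧
          (∀ i, ∀ j ∈ succ i, ∃ k : ℕ, parent^[k] i = j) ∧
          (∀ i, (succ i).card ≤ p + 3) ∧
          (∀ (i j : Fin (n + 1)), (∃ k : ℕ, parent^[k] i = j) →
            ReachIn succ ⌈C * (1 + Real.log (n + 1))⌉₊ i j) := by
  refine ⟨3, by norm_num, ?_⟩
  intro n p parent hroot hltf hdeg
  have hlt : ∀ i : Fin (n+1), i ≠ 0 → (parent i : ℕ) < (i : ℕ) := fun i h => hltf i h
  set dep : Fin (n+1) → ℕ := lhDepth parent hlt with hdep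
  set P : ℕ → ℕ × ℕ := fun x => lhPtr 0 (n+1) x with hPdef
  set succ : Fin (n+1) → Finset (Fin (n+1)) := fun i =>
    if i = 0 then (∅ : Finset (Fin (n+1)))
    else {parent i, parent^[dep i - (P (dep i)).1] i, parent^[dep i - (P (dep i)).2] i}
    with hsucc
  have hdep0 : dep 0 = 0 := lhDepth_zero parent hlt
  have hdepne : ∀ i : Fin (n+1), 1 ≤ dep i → i ≠ 0 := fun i h => lhDepth_ne_zero parent hlt h
  have hdepit : ∀ (k : ℕ) (i : Fin (n+1)), k ≤ dep i → dep (parent^[k] i) = dep i - k :=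
    fun k i h => lhDepth_iterate parent hlt k i h
  have hdeple : ∀ i : Fin (n+1), dep i ≤ (i : ℕ) := lhDepth_le parent hlt
  have hdepz : ∀ i : Fin (n+1), parent^[dep i] i = 0 :=
    fun i => lhDepth_iterate_zero parent hlt hroot (i : ℕ) i le_rfl
  have hsucc_ne : ∀ i : Fin (n+1), i ≠ 0 → succ i =
      {parent i, parent^[dep i - (P (dep i)).1] i, parent^[dep i - (P (dep i)).2] i} := by
    intro i h
    rw [hsucc]
    simp only [if_neg h]
  refine ⟨succ, ?_, ?_, ?_, ?_⟩
  · -- parent membership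
    intro i h
    rw [hsucc_ne i h]
    exact Finset.mem_insert_self _ _
  · -- all successors are ancestors
    intro i j hj
    by_cases h0 : i = 0
    · rw [hsucc, h0] at hj
      simp at hj
    · rw [hsucc_ne i h0] at hj
      simp only [Finset.mem_insert, Finset.mem_singleton] at hj
      rcases hj with h | h | h
      · exact ⟨1, by rw [Function.iterate_one, h]⟩
      · exact ⟨_, h.symm⟩
      · exact ⟨_, h.symm⟩
  · -- out-degree bound
    intro i
    by_cases h0 : i = 0
    · rw [hsucc, h0]
      simp
    · rw [hsucc_ne i h0]
      refine le_trans ?_ (by omega : 3 ≤ p + 3)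
      refine le_trans (Finset.card_insert_le _ _) ?_
      have h2 := Finset.card_insert_le (parent^[dep i - (P (dep i)).1] i)
        ({parent^[dep i - (P (dep i)).2] i} : Finset (Fin (n+1)))
      have h3 : ({parent^[dep i - (P (dep i)).2] i} : Finset (Fin (n+1))).card = 1 :=
        Finset.card_singleton _
      omega
  · -- the routing bound
    intro i j hk
    obtain ⟨k, hk⟩ := hk
    -- j is the ancestor of i at depth (dep j)
    have hjd : j = parent^[dep i - dep j] i ∧ dep j ≤ dep i := by
      by_cases hkd : k ≤ dep i
      · have h1 : dep j = dep i - k := by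
          rw [← hk]
          exact hdepit k i hkd
        constructor
        · rw [h1, show dep i - (dep i - k) = k by omega, hk]
        · omega
      · have h0 : parent^[dep i] i = 0 := hdepz i
        have hj0 : j = 0 := by
          rw [← hk, show k = (k - dep i) + dep i by omega, Function.iterate_add_apply, h0,
            Function.iterate_fixed hroot]
        rw [hj0, hdep0]
        refine ⟨?_, Nat.zero_le _⟩
        rw [Nat.sub_zero, h0]
    obtain ⟨hj, hed⟩ := hjd
    -- transfer lemma: line reachability gives graph reachability
    have htrans : ∀ (K : ℕ) (i : Fin (n+1)) (e : ℕ), lhReach P K (dep i) e →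
        ReachIn succ K i (parent^[dep i - e] i) := by
      intro K
      induction K with
      | zero =>
        intro i e h
        have he : dep i = e := h
        rw [he, Nat.sub_self, Function.iterate_zero_apply]
        exact rfl
      | succ K ih =>
        intro i e h
        rcases h with he | ⟨t, ⟨hx1, hcase⟩, het, htd, hrest⟩
        · rw [he, Nat.sub_self, Function.iterate_zero_apply]
          exact Or.inl rfl
        · have hine : i ≠ 0 := hdepne i hx1
          have hdx' : dep (parent^[dep i - t] i) = t := by
            rw [hdepit (dep i - t) i (by omega)]
            omega
          have hmem : parent^[dep i - t] i ∈ succ i := by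
            rw [hsucc_ne i hine]
            rcases hcase with h | h | h
            · rw [show dep i - t = 1 by omega, Function.iterate_one]
              exact Finset.mem_insert_self _ _
            · rw [h]
              exact Finset.mem_insert_of_mem (Finset.mem_insert_self _ _)
            · rw [h]
              exact Finset.mem_insert_of_mem
                (Finset.mem_insert_of_mem (Finset.mem_singleton_self _))
          have hih := ih (parent^[dep i - t] i) e (by rw [hdx']; exact hrest)
          rw [hdx'] at hih
          have harr : parent^[t - e] (parent^[dep i - t] i) = parent^[dep i - e] i := by
            rw [← Function.iterate_add_apply, show (t - e) + (dep i - t) = dep i - e by omega]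
          rw [harr] at hih
          exact Or.inr ⟨parent^[dep i - t] i, hmem, hih⟩
    -- apply the main line lemma
    have hdle : dep i ≤ n := by
      have h1 := hdeple i
      have h2 := i.isLt
      omega
    have hmain := lhMain P (n+1) 0 (dep i) (dep j) (fun y _ _ => rfl)
      (Nat.zero_le _) hed (by omega)
    -- numeric bound
    have hnum : 2 * Nat.log 2 (n+1) + 1 ≤ ⌈(3:ℝ) * (1 + Real.log ((n:ℝ) + 1))⌉₊ := by
      have h2 : (2:ℝ) ^ (Nat.log 2 (n+1)) ≤ ((n:ℝ) + 1) := by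
        exact_mod_cast Nat.pow_log_le_self 2 (Nat.succ_ne_zero n)
      have hL : (Nat.log 2 (n+1) : ℝ) * Real.log 2 ≤ Real.log ((n:ℝ) + 1) := by
        have := Real.log_le_log (by positivity) h2
        rwa [Real.log_pow] at this
      have hl2 : (0.6931471803 : ℝ) < Real.log 2 := Real.log_two_gt_d9
      have hL0 : (0:ℝ) ≤ (Nat.log 2 (n+1) : ℝ) := Nat.cast_nonneg _
      have hlog0 : (0:ℝ) ≤ Real.log ((n:ℝ) + 1) := by
        apply Real.log_nonneg
        have : (0:ℝ) ≤ (n:ℝ) := Nat.cast_nonneg n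
        linarith
      have hprod : (Nat.log 2 (n+1) : ℝ) * 0.6931471803 ≤ (Nat.log 2 (n+1) : ℝ) * Real.log 2 :=
        mul_le_mul_of_nonneg_left hl2.le hL0
      have hreal : ((2 * Nat.log 2 (n+1) + 1 : ℕ) : ℝ) ≤ 3 * (1 + Real.log ((n:ℝ) + 1)) := by
        push_cast
        linarith
      have hceil := Nat.le_ceil ((3:ℝ) * (1 + Real.log ((n:ℝ) + 1)))
      exact_mod_cast le_trans hreal hceil
    have hfin := htrans (⌈(3:ℝ) * (1 + Real.log ((n:ℝ) + 1))⌉₊) i (dep j)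
      (lhReach_mono hnum hmain)
    rw [← hj] at hfin
    exact_mod_cast hfin
end

section
/- Fix b, β ∈ [0,1] and η > 0, and let j range over integers with 0 ≤ jη ≤ 1. For a ∈ [0,1] with a ≤ b, the minimum v ≥ 0 satisfying v ≥ 2(jη)(b − a) − (jη)² + 2η for all such j lies in the interval [(b−a)², (b−a)² + 2η]. -/
/-- Correctness of the tangent-line LP modeling of the squared loss. -/
theorem tangent_lp_squared_loss (b β η a : ℝ)
    (hb : b ∈ Set.Icc (0:ℝ) 1) (hβ : β ∈ Set.Icc (0:ℝ) 1) (hη : 0 < η)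
    (ha : a ∈ Set.Icc (0:ℝ) 1) (hab : a ≤ b) :
    ∃ v : ℝ, IsLeast {v : ℝ | 0 ≤ v ∧ ∀ j : ℕ, (j : ℝ) * η ≤ 1 →
        2 * ((j : ℝ) * η) * (b - a) - ((j : ℝ) * η) ^ 2 + 2 * η ≤ v} v ∧
      v ∈ Set.Icc ((b - a) ^ 2) ((b - a) ^ 2 + 2 * η) := by
  obtain ⟨ha0, ha1⟩ := ha
  obtain ⟨hb0, hb1⟩ := hb
  have hd0 : 0 ≤ b - a := by linarith
  have hd1 : b - a ≤ 1 := by linarith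
  set N : ℕ := ⌊1/η⌋₊ with hN
  set f : ℕ → ℝ := fun j => 2 * ((j:ℝ)*η) * (b - a) - ((j:ℝ)*η)^2 + 2*η with hf
  have hne : (Finset.range (N+1)).Nonempty := ⟨0, by simp⟩
  set v := (Finset.range (N+1)).sup' hne f with hv
  have hmem : ∀ j : ℕ, (j:ℝ)*η ≤ 1 → j ∈ Finset.range (N+1) := by
    intro j hj
    simp only [Finset.mem_range, Nat.lt_succ_iff]
    rw [hN, Nat.le_floor_iff (by positivity)]
    rw [le_div_iff₀ hη]
    linarith
  have hjle : ∀ j ∈ Finset.range (N+1), (j:ℝ)*η ≤ 1 := by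
    intro j hj
    have h1 : (j:ℝ) ≤ N := by exact_mod_cast Nat.lt_succ_iff.mp (Finset.mem_range.mp hj)
    have hNle : (N:ℝ) ≤ 1/η := Nat.floor_le (by positivity)
    calc (j:ℝ)*η ≤ (1/η)*η := by nlinarith
    _ = 1 := by field_simp
  refine ⟨v, ⟨⟨?_, ?_⟩, ?_⟩, ?_, ?_⟩
  · have h0 : f 0 ≤ v := Finset.le_sup' f (by simp)
    simp only [hf, Nat.cast_zero, zero_mul, mul_zero] at h0
    nlinarith
  · intro j hj
    exact Finset.le_sup' f (hmem j hj)
  · intro w hw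
    exact Finset.sup'_le _ _ fun j hj => hw.2 j (hjle j hj)
  · set j0 : ℕ := ⌊(b-a)/η⌋₊ with hj0
    have h1 : (j0:ℝ) ≤ (b-a)/η := Nat.floor_le (by positivity)
    have ht : (j0:ℝ)*η ≤ b - a := by
      calc (j0:ℝ)*η ≤ ((b-a)/η)*η := by nlinarith
      _ = b - a := by field_simp
    have h2 : (b-a)/η < (j0:ℝ)+1 := Nat.lt_floor_add_one _
    have htgt : b - a < ((j0:ℝ)+1)*η := by
      calc b - a = ((b-a)/η)*η := by field_simp
      _ < ((j0:ℝ)+1)*η := by nlinarith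
    have hfle : f j0 ≤ v := Finset.le_sup' f (hmem j0 (le_trans ht hd1))
    have hkey : (b-a)^2 ≤ f j0 := by
      simp only [hf]
      have h3 : 0 ≤ b - a - (j0:ℝ)*η := by linarith
      have h4 : b - a - (j0:ℝ)*η < η := by nlinarith
      nlinarith [mul_nonneg h3 (le_of_lt (show (0:ℝ) < η - (b - a - (j0:ℝ)*η) by linarith)),
        mul_nonneg hη.le (mul_nonneg (Nat.cast_nonneg j0) hη.le),
        mul_nonneg hη.le (show (0:ℝ) ≤ 1 - (b - a) by linarith)]
    linarith
  · exact Finset.sup'_le _ _ fun j _ => by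
      have := sq_nonneg ((j:ℝ)*η - (b-a)); simp only [hf]; nlinarith
end
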